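/- Define $r(x) = \frac{3 - \sqrt{1+8(1-2x)^2}}{8}$ and $\psi(x) = H(2r(x)) + 4r(x) + 2(1-2r(x)) H\!\left(\frac{x - r(x)}{1-2r(x)}\right) - 2H(x)$ for $x \in (0, 1/2]$, where $H(p) = -p\log_2 p - (1-p)\log_2(1-p)$ is the binary entropy. Then $\psi$ is strictly concave on $(0, 1/2]$: $\psi''(x) < 0$ for all $0 < x \le 1/2$. In fact $\psi''(x) = -\frac{16}{\ln 2 \cdot (3-8r(x))(3-4r(x))}$. -/

import Mathlib

/-!
The quadratic `4 r² - 3 r + 2 x (1 - x) = 0` solved by `r x` can be rewritten as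
`2 (x - r) (1 - x - r) = r (1 - 2 r)`, which says exactly that `s = r x` is a critical point of
`s ↦ ψ(x; s)`, the expression for `ψ` with `r x` replaced by `s`. Hence `r'` does not enter `ψ'`,
which is the partial `x`-derivative `(2 / log 2) log (x (1 - x - r) / ((1 - x) (x - r)))`.
Differentiating once more, with `r' = (2 - 4 x) / (3 - 8 r)` and the quadratic to eliminate powers
of `r`, gives `ψ'' = -16 / (log 2 (3 - 8 r) (3 - 4 r))`, which is negative since `r ≤ 1/4`.
-/

/-- Binary entropy `H(p) = -p log₂ p - (1-p) log₂ (1-p)`. -/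
noncomputable def H (p : ℝ) : ℝ := -p * Real.logb 2 p - (1 - p) * Real.logb 2 (1 - p)

/-- `r(x) = (3 - √(1 + 8(1-2x)²)) / 8`. -/
noncomputable def r (x : ℝ) : ℝ := (3 - Real.sqrt (1 + 8 * (1 - 2 * x) ^ 2)) / 8

/-- `ψ(x) = H(2r) + 4r + 2(1-2r) H((x-r)/(1-2r)) - 2H(x)`. -/
noncomputable def psi (x : ℝ) : ℝ :=
  H (2 * r x) + 4 * r x + 2 * (1 - 2 * r x) * H ((x - r x) / (1 - 2 * r x)) - 2 * H x

open Real

lemma H_eq_binEntropy_div_log_two : H = fun p => binEntropy p / log 2 := by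
  funext p
  simp only [H, binEntropy, logb, log_inv]
  ring

lemma hasDerivAt_H {p : ℝ} (h0 : p ≠ 0) (h1 : p ≠ 1) :
    HasDerivAt H ((log (1 - p) - log p) / log 2) p :=
  H_eq_binEntropy_div_log_two ▸ (hasDerivAt_binEntropy h0 h1).div_const _

section r

variable (x : ℝ)

lemma sqrt_eq_three_sub_eight_mul_r : √(1 + 8 * (1 - 2 * x) ^ 2) = 3 - 8 * r x := by
  simp only [r]; ring

lemma one_le_three_sub_eight_mul_r : 1 ≤ 3 - 8 * r x := by
  rw [← sqrt_eq_three_sub_eight_mul_r]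
  exact one_le_sqrt.mpr (by nlinarith)

lemma r_le_one_quarter : r x ≤ 1 / 4 := by
  linarith [one_le_three_sub_eight_mul_r x]

lemma r_quadratic : 4 * r x ^ 2 - 3 * r x + 2 * x * (1 - x) = 0 := by
  have h := sq_sqrt (by positivity : (0 : ℝ) ≤ 1 + 8 * (1 - 2 * x) ^ 2)
  rw [sqrt_eq_three_sub_eight_mul_r] at h
  linear_combination h / 16

lemma two_mul_sub_r_mul_sub_r : 2 * (x - r x) * (1 - x - r x) = r x * (1 - 2 * r x) := by
  linear_combination r_quadratic x

lemma hasDerivAt_r : HasDerivAt r ((2 - 4 * x) / (3 - 8 * r x)) x := by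
  have hpos : (0 : ℝ) < 1 + 8 * (1 - 2 * x) ^ 2 := by positivity
  have hin : HasDerivAt (fun y : ℝ => 1 + 8 * (1 - 2 * y) ^ 2) (-32 * (1 - 2 * x)) x := by
    have h := ((((hasDerivAt_id x).const_mul 2).const_sub 1).pow 2).const_mul 8 |>.const_add 1
    exact h.congr_deriv (by simp only [id]; ring)
  refine (((hin.sqrt hpos.ne').const_sub 3).div_const 8).congr_deriv ?_
  rw [sqrt_eq_three_sub_eight_mul_r]
  have h8 := one_le_three_sub_eight_mul_r x
  field_simp
  ring

variable {x}

lemma r_pos (h0 : 0 < x) (h1 : x < 1) : 0 < r x := by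
  have : √(1 + 8 * (1 - 2 * x) ^ 2) < 3 :=
    (sqrt_lt' (by norm_num)).mpr (by nlinarith)
  rw [sqrt_eq_three_sub_eight_mul_r] at this
  linarith

lemma r_lt_self (h0 : 0 < x) : r x < x := by
  nlinarith [two_mul_sub_r_mul_sub_r x, r_le_one_quarter x]

lemma add_r_lt_one (h1 : x < 1) : x + r x < 1 := by
  nlinarith [two_mul_sub_r_mul_sub_r x, r_le_one_quarter x]

end r

noncomputable def psiWith (s x : ℝ) : ℝ :=
  H (2 * s) + 4 * s + 2 * (1 - 2 * s) * H ((x - s) / (1 - 2 * s)) - 2 * H x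

lemma hasDerivAt_psiWith_comp {s : ℝ → ℝ} {s' x : ℝ} (hs : HasDerivAt s s' x)
    (hs0 : 0 < s x) (hsx : s x < x) (hxs : x + s x < 1) :
    HasDerivAt (fun y => psiWith (s y) y)
      (2 / log 2 * ((log (1 - x - s x) - log (x - s x) - log (1 - x) + log x) +
        (log 2 + log (x - s x) + log (1 - x - s x) - log (s x) - log (1 - 2 * s x)) * s')) x := by
  set S := s x with hS
  have ha : 0 < x - S := by linarith
  have hb : 0 < 1 - x - S := by linarith
  have hc : 0 < 1 - 2 * S := by linarith
  have hlog2 : 0 < log 2 := log_pos one_lt_two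
  have hlog_u : log ((x - S) / (1 - 2 * S)) = log (x - S) - log (1 - 2 * S) :=
    log_div ha.ne' hc.ne'
  have hlog_one_sub_u : log (1 - (x - S) / (1 - 2 * S)) = log (1 - x - S) - log (1 - 2 * S) := by
    rw [one_sub_div hc.ne', log_div (by linarith) hc.ne']
    ring_nf
  have hlog_two_mul : log (2 * S) = log 2 + log S := log_mul two_ne_zero hs0.ne'
  have h2s : HasDerivAt (fun y => 2 * s y) (2 * s') x := hs.const_mul 2
  have hc' : HasDerivAt (fun y => 1 - 2 * s y) (-(2 * s')) x := h2s.const_sub 1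
  have hu := ((hasDerivAt_id x).sub hs).div hc' hc.ne'
  have hu1 : (x - S) / (1 - 2 * S) ≠ 1 := div_ne_one_of_ne (by linarith)
  have hHu := (hasDerivAt_H (div_pos ha hc).ne' hu1).comp x hu
  have hH2s := (hasDerivAt_H (by positivity : 2 * S ≠ 0) (by linarith : 2 * S ≠ 1)).comp x h2s
  have hHx := (hasDerivAt_H (by linarith : x ≠ 0) (by linarith : x ≠ 1)).const_mul 2
  refine (((hH2s.add (hs.const_mul 4)).add ((hc'.const_mul 2).mul hHu)).sub hHx).congr_deriv ?_
  simp only [Function.comp_apply, Pi.sub_apply, Pi.div_apply, id, H, logb, ← hS]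
  rw [hlog_u, hlog_one_sub_u, hlog_two_mul]
  field_simp
  ring

/-- The coefficient of `s'` in `hasDerivAt_psiWith_comp` at `s = r x`: it vanishes because `r x`
is a critical point of `s ↦ psiWith s x`. -/
lemma r_critical {x : ℝ} (h0 : 0 < x) (h1 : x < 1) :
    log 2 + log (x - r x) + log (1 - x - r x) - log (r x) - log (1 - 2 * r x) = 0 := by
  have ha : 0 < x - r x := by linarith [r_lt_self h0]
  have hb : 0 < 1 - x - r x := by linarith [add_r_lt_one h1]
  have hc : 0 < 1 - 2 * r x := by linarith [r_le_one_quarter x]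
  have h := congrArg log (two_mul_sub_r_mul_sub_r x)
  rw [log_mul (by positivity) hb.ne', log_mul two_ne_zero ha.ne',
    log_mul (r_pos h0 h1).ne' hc.ne'] at h
  linarith

noncomputable def psiDeriv (x : ℝ) : ℝ :=
  2 / log 2 * (log (1 - x - r x) - log (x - r x) - log (1 - x) + log x)

lemma hasDerivAt_psi {x : ℝ} (h0 : 0 < x) (h1 : x < 1) : HasDerivAt psi (psiDeriv x) x := by
  have h := hasDerivAt_psiWith_comp (hasDerivAt_r x) (r_pos h0 h1) (r_lt_self h0) (add_r_lt_one h1)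
  rwa [r_critical h0 h1, zero_mul, add_zero] at h

lemma hasDerivAt_psiDeriv {x : ℝ} (h0 : 0 < x) (h1 : x < 1) :
    HasDerivAt psiDeriv (-(16 / (log 2 * (3 - 8 * r x) * (3 - 4 * r x)))) x := by
  have ha : 0 < x - r x := by linarith [r_lt_self h0]
  have hb : 0 < 1 - x - r x := by linarith [add_r_lt_one h1]
  have h1x : 0 < 1 - x := by linarith
  have h8 : 1 ≤ 3 - 8 * r x := one_le_three_sub_eight_mul_r x
  have h4 : 0 < 3 - 4 * r x := by linarith
  have hlog2 : 0 < log 2 := log_pos one_lt_two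
  have hr := hasDerivAt_r x
  have hfb := (((hasDerivAt_id x).const_sub 1).sub hr).log hb.ne'
  have hfa := ((hasDerivAt_id x).sub hr).log ha.ne'
  have hf1x := ((hasDerivAt_id x).const_sub 1).log (by linarith : 1 - x ≠ 0)
  have hfx := hasDerivAt_log h0.ne'
  refine ((((hfb.sub hfa).sub hf1x).add hfx).const_mul (2 / log 2)).congr_deriv ?_
  simp only [Pi.sub_apply, id]
  field_simp
  linear_combination
    (2 * (3 - 8 * r x) * (1 - r x) - 16 * x * (1 - x) * (1 - 2 * r x)) * r_quadratic x

theorem stmt_16 :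
    ∀ x : ℝ, 0 < x → x ≤ 1 / 2 →
      deriv (deriv psi) x = -(16 / (Real.log 2 * (3 - 8 * r x) * (3 - 4 * r x))) ∧
        deriv (deriv psi) x < 0 := by
  intro x h0 hx
  have h1 : x < 1 := by linarith
  have hderiv : deriv psi =ᶠ[nhds x] psiDeriv :=
    Filter.eventually_of_mem (isOpen_Ioo.mem_nhds ⟨h0, h1⟩)
      fun y hy => (hasDerivAt_psi hy.1 hy.2).deriv
  rw [hderiv.deriv_eq, (hasDerivAt_psiDeriv h0 h1).deriv]
  refine ⟨rfl, neg_neg_of_pos (div_pos (by norm_num) ?_)⟩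
  have h8 := one_le_three_sub_eight_mul_r x
  exact mul_pos (mul_pos (log_pos one_lt_two) (by linarith)) (by linarith)
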